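/- arXiv:math/0403361 — 2 statements merged into one kernel-verified Lean document; each statement's English description precedes it below -/
import Mathlib

section
/- Let k be a field, l/k a field extension, and A an associative k-algebra. Then A is finitely generated as a k-algebra if and only if A ⊗_k l is finitely generated as an l-algebra. -/
open TensorProduct

/-!
Generators of `A` over `k`, viewed as `1 ⊗ a`, generate `l ⊗ A` over `l`. Conversely, the finitely
many second tensor factors appearing in generators of `l ⊗ A` give a map from a free `k`-algebra
to `A` whose base change to `l` is surjective; since `l` is faithfully flat over `k`, the map
itself is surjective.
-/

namespace Algebra.FiniteType

theorem baseChange_of_semiring {R : Type*} (T : Type*) {A : Type*} [CommSemiring R]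
    [CommSemiring T] [Semiring A] [Algebra R T] [Algebra R A] [h : FiniteType R A] :
    FiniteType T (T ⊗[R] A) := by
  classical
  obtain ⟨s, hs⟩ := h.out
  exact ⟨⟨s.image ((1 : T) ⊗ₜ[R] ·), by
    simpa using Algebra.TensorProduct.adjoin_one_tmul_image_eq_top (A := T) _ hs⟩⟩

theorem of_baseChange_of_faithfullyFlat {R : Type*} (T : Type*) {A : Type*} [CommRing R]
    [CommRing T] [Ring A] [Algebra R T] [Algebra R A] [Module.FaithfullyFlat R T]
    [h : FiniteType T (T ⊗[R] A)] : FiniteType R A := by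
  obtain ⟨s, hs⟩ := h.out
  choose n t a hta using fun x : s ↦ TensorProduct.exists_sum_tmul_eq x.1
  let f : FreeAlgebra R (Σ x : s, Fin (n x)) →ₐ[R] A := FreeAlgebra.lift R fun ⟨x, i⟩ ↦ a x i
  apply of_surjective f
  have hf : Function.Surjective (Algebra.TensorProduct.map (AlgHom.id T T) f) := by
    rw [← AlgHom.range_eq_top, _root_.eq_top_iff, ← hs, adjoin_le_iff]
    intro x hx
    use ∑ i : Fin (n ⟨x, hx⟩), t ⟨x, hx⟩ i ⊗ₜ FreeAlgebra.ι R ⟨⟨x, hx⟩, i⟩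
    simp [f, ← hta]
  exact (Module.FaithfullyFlat.lTensor_surjective_iff_surjective _ T _).mp hf

end Algebra.FiniteType

/-- An associative `k`-algebra `A` is finitely generated as a `k`-algebra if and only if
`A ⊗_k l` is finitely generated as an `l`-algebra, for any field extension `l/k`. -/
theorem finiteType_iff_finiteType_baseChange
    (k : Type*) [Field k] (l : Type*) [Field l] [Algebra k l]
    (A : Type*) [Ring A] [Algebra k A] :
    Algebra.FiniteType k A ↔ Algebra.FiniteType l (l ⊗[k] A) :=
  ⟨fun _ ↦ .baseChange_of_semiring l, fun _ ↦ .of_baseChange_of_faithfullyFlat l⟩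
end

section
/- Let G be a group with the property (FG): whenever G acts by k-algebra automorphisms on a finitely generated commutative k-algebra B, the invariant ring B^G is a finitely generated k-algebra. Then G has property (Noeth): whenever G acts on a finitely generated commutative k-algebra A and compatibly on a Noetherian A-module M, the module of invariants M^G is a Noetherian (in particular finitely generated) A^G-module. (Proof via the square-zero extension A ⊕ M.) -/
/-- The subalgebra of invariants of an action of a group `G` on a `k`-algebra `A`
by `k`-algebra automorphisms, given as a homomorphism `ρ : G →* (A ≃ₐ[k] A)`. -/
def invariantSubalgebra (k : Type*) [CommSemiring k] (A : Type*) [CommRing A] [Algebra k A]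
    (G : Type*) [Group G] (ρ : G →* (A ≃ₐ[k] A)) : Subalgebra k A where
  carrier := {a : A | ∀ g : G, ρ g a = a}
  mul_mem' := fun {a b} ha hb g => by rw [map_mul, ha g, hb g]
  add_mem' := fun {a b} ha hb g => by rw [map_add, ha g, hb g]
  algebraMap_mem' := fun r g => AlgEquiv.commutes (ρ g) r

instance addEquivSelfGroup (M : Type*) [Add M] : Group (M ≃+ M) where
  mul g h := AddEquiv.trans h g
  one := AddEquiv.refl _
  inv := AddEquiv.symm
  mul_assoc _ _ _ := rfl
  one_mul _ := rfl
  mul_one _ := rfl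
  inv_mul_cancel := AddEquiv.self_trans_symm

/-- The submodule of invariants `M^G`, as a module over the invariant subalgebra `A^G`,
for a compatible action of `G` on an `A`-module `M`. -/
def invariantSubmodule (k : Type*) [CommSemiring k] (A : Type*) [CommRing A] [Algebra k A]
    (G : Type*) [Group G] (ρ : G →* (A ≃ₐ[k] A))
    (M : Type*) [AddCommGroup M] [Module A M] (σ : G →* (M ≃+ M))
    (hcompat : ∀ (g : G) (a : A) (m : M), σ g (a • m) = (ρ g a) • (σ g m)) :
    Submodule (invariantSubalgebra k A G ρ) M where
  carrier := {m : M | ∀ g : G, σ g m = m}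
  add_mem' := fun {m m'} hm hm' g => by rw [map_add, hm g, hm' g]
  zero_mem' := fun g => map_zero (σ g)
  smul_mem' := fun s {m} hm g => by
    have : σ g ((s : A) • m) = ((s : A) • m) := by rw [hcompat g s m, s.2 g, hm g]
    exact this

/-! The square-zero extension `B = A ⊕ M` is a finite `A`-algebra, hence a finitely generated
`k`-algebra, and `G` acts on it by `g (a, m) = (g a, g m)`. By (FG) the ring `Bᴳ` is finitely
generated, hence Noetherian. The map `m ↦ (0, m)` embeds `Mᴳ` into `Bᴳ`, and since
`(a, n) * (0, m) = (0, a m)` it is linear when `Bᴳ` acts on `Mᴳ` through `(a, n) ↦ a ∈ Aᴳ`.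
So `Mᴳ` is a Noetherian `Bᴳ`-module, and its `Aᴳ`-submodules are among its `Bᴳ`-submodules. -/

@[simp]
theorem addEquivSelfGroup_one_apply {M : Type*} [Add M] (m : M) : (1 : M ≃+ M) m = m := rfl

@[simp]
theorem addEquivSelfGroup_mul_apply {M : Type*} [Add M] (f g : M ≃+ M) (m : M) :
    (f * g) m = f (g m) :=
  rfl

theorem isNoetherian_of_injective_of_map_smul {R S M P : Type*} [Semiring R] [Semiring S]
    [AddCommMonoid M] [Module S M] [AddCommMonoid P] [Module R P] [IsNoetherian R P]
    (φ : R →+* S) (f : M →+ P) (hf : Function.Injective f)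
    (hsmul : ∀ (r : R) (m : M), f (φ r • m) = r • f m) : IsNoetherian S M := by
  let : SMul R S := ⟨fun r s => φ r * s⟩
  let : Module R M := Module.compHom M φ
  have : IsScalarTower R S M := ⟨fun r s m => mul_smul (φ r) s m⟩
  let fₗ : M →ₗ[R] P := { toFun := f, map_add' := f.map_add, map_smul' := hsmul }
  exact isNoetherian_of_tower R (isNoetherian_of_injective fₗ hf)

namespace TrivSqZeroExt

theorem mul_inr {R M : Type*} [Semiring R] [AddCommMonoid M] [Module R M] [Module Rᵐᵒᵖ M]
    (x : TrivSqZeroExt R M) (m : M) : x * inr m = inr (x.fst • m) := by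
  ext <;> simp

instance moduleFinite {R M : Type*} [Semiring R] [AddCommMonoid M] [Module R M]
    [Module.Finite R M] : Module.Finite R (TrivSqZeroExt R M) :=
  inferInstanceAs (Module.Finite R (R × M))

variable {k A M : Type*} [CommSemiring k] [CommRing A] [Algebra k A]
  [AddCommGroup M] [Module A M] [Module Aᵐᵒᵖ M] [IsCentralScalar A M]
  [Module k M] [IsScalarTower k A M]

def mapSemilinear (e : A ≃ₐ[k] A) (f : M ≃+ M)
    (hf : ∀ (a : A) (m : M), f (a • m) = e a • f m) :
    TrivSqZeroExt A M ≃ₐ[k] TrivSqZeroExt A M where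
  toFun x := inl (e x.fst) + inr (f x.snd)
  invFun x := inl (e.symm x.fst) + inr (f.symm x.snd)
  left_inv x := by ext <;> simp
  right_inv x := by ext <;> simp
  map_add' x y := by ext <;> simp [add_add_add_comm]
  map_mul' x y := by ext <;> simp [hf, add_comm]
  commutes' c := by ext <;> simp [algebraMap_eq_inl']

section mapSemilinear

variable (e : A ≃ₐ[k] A) (f : M ≃+ M) (hf : ∀ (a : A) (m : M), f (a • m) = e a • f m)
  (x : TrivSqZeroExt A M)

@[simp]
theorem fst_mapSemilinear : (mapSemilinear e f hf x).fst = e x.fst := by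
  simp [mapSemilinear]

@[simp]
theorem snd_mapSemilinear : (mapSemilinear e f hf x).snd = f x.snd := by
  simp [mapSemilinear]

end mapSemilinear

variable {G : Type*} [Group G] (ρ : G →* (A ≃ₐ[k] A)) (σ : G →* (M ≃+ M))
  (hcompat : ∀ (g : G) (a : A) (m : M), σ g (a • m) = ρ g a • σ g m)

def algAction : G →* (TrivSqZeroExt A M ≃ₐ[k] TrivSqZeroExt A M) where
  toFun g := mapSemilinear (ρ g) (σ g) (hcompat g)
  map_one' := by ext <;> simp
  map_mul' g h := by ext <;> simp

local notation "Bᴳ" => invariantSubalgebra k (TrivSqZeroExt A M) G (algAction ρ σ hcompat)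

theorem fst_mem_invariantSubalgebra {x : TrivSqZeroExt A M} (hx : x ∈ Bᴳ) :
    x.fst ∈ invariantSubalgebra k A G ρ := fun g => by
  simpa [algAction] using congrArg fst (hx g)

theorem inr_mem_invariantSubalgebra {m : M} (hm : m ∈ invariantSubmodule k A G ρ M σ hcompat) :
    inr m ∈ Bᴳ := fun g => by
  ext <;> simp [algAction, hm g]

def invariantFst : Bᴳ →ₐ[k] invariantSubalgebra k A G ρ :=
  ((fstHom k A M).comp Bᴳ.val).codRestrict _ fun x =>
    fst_mem_invariantSubalgebra ρ σ hcompat x.2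

def invariantInr : invariantSubmodule k A G ρ M σ hcompat →+ Bᴳ where
  toFun m := ⟨inr m, inr_mem_invariantSubalgebra ρ σ hcompat m.2⟩
  map_zero' := Subtype.ext (inr_zero A)
  map_add' _ _ := Subtype.ext (inr_add A _ _)

theorem isNoetherian_invariantSubmodule [IsNoetherianRing Bᴳ] :
    IsNoetherian (invariantSubalgebra k A G ρ) (invariantSubmodule k A G ρ M σ hcompat) :=
  isNoetherian_of_injective_of_map_smul (invariantFst ρ σ hcompat).toRingHom
    (invariantInr ρ σ hcompat)
    (fun _ _ h => Subtype.ext (inr_injective (congrArg Subtype.val h)))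
    (fun b m => Subtype.ext (mul_inr b.1 m).symm)

end TrivSqZeroExt

/-- Property (FG) implies property (Noeth): suppose `G` has the property that for every
finitely generated commutative `k`-algebra `B` with a `G`-action by `k`-algebra
automorphisms the invariant ring `B^G` is a finitely generated `k`-algebra. Then,
whenever `G` acts on a finitely generated commutative `k`-algebra `A` and compatibly on
a Noetherian `A`-module `M`, the invariants `M^G` form a Noetherian module over `A^G`. -/
theorem fg_implies_noeth (k : Type*) [Field k] (G : Type u) [Group G]
    (hFG : ∀ (B : Type u) [CommRing B] [Algebra k B] (ρ : G →* (B ≃ₐ[k] B)),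
      Algebra.FiniteType k B → Algebra.FiniteType k (invariantSubalgebra k B G ρ))
    (A : Type u) [CommRing A] [Algebra k A] (hA : Algebra.FiniteType k A)
    (ρ : G →* (A ≃ₐ[k] A))
    (M : Type u) [AddCommGroup M] [Module A M] [IsNoetherian A M]
    (σ : G →* (M ≃+ M))
    (hcompat : ∀ (g : G) (a : A) (m : M), σ g (a • m) = (ρ g a) • (σ g m)) :
    IsNoetherian (invariantSubalgebra k A G ρ)
      (invariantSubmodule k A G ρ M σ hcompat) := by
  let : Module Aᵐᵒᵖ M := Module.compHom M ((RingHom.id A).fromOpposite mul_comm)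
  have : IsCentralScalar A M := ⟨fun _ _ => rfl⟩
  let : Module k M := Module.compHom M (algebraMap k A)
  have : IsScalarTower k A M := IsScalarTower.of_compHom k A M
  have hB : Algebra.FiniteType k (TrivSqZeroExt A M) := hA.trans inferInstance
  let ρB := TrivSqZeroExt.algAction ρ σ hcompat
  have := hFG _ ρB hB
  have := Algebra.FiniteType.isNoetherianRing k (invariantSubalgebra k _ G ρB)
  exact TrivSqZeroExt.isNoetherian_invariantSubmodule ρ σ hcompat
end
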